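/- arXiv:2004.05030 — 2 statements merged into one kernel-verified Lean document; each statement's English description precedes it below -/
import Mathlib

section
/- Every path graph admits an antimagic orientation: for every m ≥ 1 there is an orientation D of the path with m edges and a bijection τ : A(D) → {1,...,m} such that the vertex-sums (sum of labels of arcs entering a vertex minus sum of labels of arcs leaving it) are pairwise distinct. -/
/-- Closed form for the vertex-sums of our orientation of the path. -/
def pathS (m : ℕ) (v : ℕ) : ℤ :=
  if m % 4 = 3 ∧ v = m - 1 then 1
  else if v = m then (if m % 2 = 1 ∧ m % 4 ≠ 3 then (m : ℤ) else -(m : ℤ))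
  else if v % 2 = 1 then 2 * v + 1 else -(2 * (v : ℤ) + 1)

lemma pathS_inj (m : ℕ) (hm : 1 ≤ m) {a b : ℕ} (ha : a ≤ m) (hb : b ≤ m)
    (h : pathS m a = pathS m b) : a = b := by
  unfold pathS at h
  split_ifs at h <;> omega

/-- Every path admits an antimagic orientation: for every `m ≥ 1` there is an
orientation of the path `v_0 ⋯ v_m` (edge `i : Fin m` joins `v_i` and `v_{i+1}`;
`d i = true` means the arc goes from `v_i` to `v_{i+1}`) and an injective labeling
`τ` of the arcs by numbers in `{1, …, m}` such that the vertex-sums (labels of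
entering arcs minus labels of leaving arcs) are pairwise distinct. -/
theorem path_antimagic_orientation (m : ℕ) (hm : 1 ≤ m) :
    ∃ (d : Fin m → Bool) (τ : Fin m → ℤ),
      (∀ i, τ i ∈ Finset.Icc (1 : ℤ) m) ∧ Function.Injective τ ∧
      Function.Injective (fun v : Fin (m + 1) =>
        (∑ i ∈ Finset.univ.filter (fun i : Fin m => (i : ℕ) + 1 = (v : ℕ)),
          (if d i then τ i else -τ i)) +
        (∑ i ∈ Finset.univ.filter (fun i : Fin m => (i : ℕ) = (v : ℕ)),
          (if d i then -τ i else τ i))) := by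
  classical
  set d : Fin m → Bool := fun i =>
    decide ((i : ℕ) % 2 = 0 ∧ ¬(m % 4 = 3 ∧ (i : ℕ) = m - 1)) with hd
  set τ : Fin m → ℤ := fun i => (i : ℤ) + 1 with hτ
  refine ⟨d, τ, ?_, ?_, ?_⟩
  · intro i
    have := i.isLt
    simp only [hτ, Finset.mem_Icc]
    omega
  · intro a b h
    simp only [hτ] at h
    have : (a : ℕ) = (b : ℕ) := by omega
    exact Fin.ext this
  · have key : ∀ u : Fin (m + 1),
        ((∑ i ∈ Finset.univ.filter (fun i : Fin m => (i : ℕ) + 1 = (u : ℕ)),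
          (if d i then τ i else -τ i)) +
        (∑ i ∈ Finset.univ.filter (fun i : Fin m => (i : ℕ) = (u : ℕ)),
          (if d i then -τ i else τ i))) = pathS m (u : ℕ) := by
      intro u
      have hum : (u : ℕ) ≤ m := (Nat.lt_succ_iff.mp u.isLt)
      have e1 : (∑ i ∈ Finset.univ.filter (fun i : Fin m => (i : ℕ) + 1 = (u : ℕ)),
          (if d i then τ i else -τ i)) =
          if h : 1 ≤ (u : ℕ) then
            (if d ⟨(u : ℕ) - 1, by omega⟩ then ((u : ℕ) : ℤ) else -((u : ℕ) : ℤ))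
          else 0 := by
        split
        · rename_i h
          have hfil : Finset.univ.filter (fun i : Fin m => (i : ℕ) + 1 = (u : ℕ)) =
              {(⟨(u : ℕ) - 1, by omega⟩ : Fin m)} := by
            ext i
            simp [Fin.ext_iff]
            omega
          rw [hfil, Finset.sum_singleton]
          have hτv : τ ⟨(u : ℕ) - 1, by omega⟩ = ((u : ℕ) : ℤ) := by
            simp only [hτ]
            omega
          rw [hτv]
        · rename_i h
          have hfil : Finset.univ.filter (fun i : Fin m => (i : ℕ) + 1 = (u : ℕ)) = ∅ := by
            ext i
            simp
            omega
          rw [hfil, Finset.sum_empty]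
      have e2 : (∑ i ∈ Finset.univ.filter (fun i : Fin m => (i : ℕ) = (u : ℕ)),
          (if d i then -τ i else τ i)) =
          if h : (u : ℕ) < m then
            (if d ⟨(u : ℕ), h⟩ then -(((u : ℕ) : ℤ) + 1) else ((u : ℕ) : ℤ) + 1)
          else 0 := by
        split
        · rename_i h
          have hfil : Finset.univ.filter (fun i : Fin m => (i : ℕ) = (u : ℕ)) =
              {(⟨(u : ℕ), h⟩ : Fin m)} := by
            ext i
            simp [Fin.ext_iff]
          rw [hfil, Finset.sum_singleton]
        · rename_i h
          have hfil : Finset.univ.filter (fun i : Fin m => (i : ℕ) = (u : ℕ)) = ∅ := by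
            ext i
            simp
            omega
          rw [hfil, Finset.sum_empty]
      rw [e1, e2]
      simp only [hd, decide_eq_true_eq, pathS]
      split_ifs <;> omega
    intro v w h
    simp only at h
    rw [key v, key w] at h
    exact Fin.ext (pathS_inj m hm (Nat.lt_succ_iff.mp v.isLt) (Nat.lt_succ_iff.mp w.isLt) h)
end

section
/- In any tree T, let P be a longest path of T with vertex set V(P), let U ⊆ V(P) be the set of vertices of P having degree at least 3 in T, let X be the set of vertices not on P adjacent to a vertex of U, and let Y = V(T) \ (X ∪ V(P)). If removing the leaves of T yields a caterpillar (i.e., T is a lobster), then every vertex of Y is a leaf of T. -/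
namespace SimpleGraph
namespace Walk
variable {V : Type*} {G : SimpleGraph V}

lemma getVert_mem_support' {u v : V} (p : G.Walk u v) {n : ℕ} (hn : n ≤ p.length) :
    p.getVert n ∈ p.support :=
  mem_support_iff_exists_getVert.mpr ⟨n, rfl, hn⟩

lemma IsPath.getVert_injOn' {u v : V} (p : G.Walk u v) (hp : p.IsPath) :
    ∀ i j, i ≤ p.length → j ≤ p.length → p.getVert i = p.getVert j → i = j := by
  induction p with
  | nil => intro i j hi hj _; simp only [length_nil, Nat.le_zero] at hi hj; omega
  | @cons c c' t h q ih =>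
    intro i j hi hj hij
    have hq : q.IsPath := hp.of_cons
    have hc : c ∉ q.support := ((cons_isPath_iff _ _).mp hp).2
    rw [length_cons] at hi hj
    match i, j with
    | 0, 0 => rfl
    | 0, j + 1 =>
      exfalso
      rw [getVert_zero, getVert_cons_succ] at hij
      exact hc (hij ▸ q.getVert_mem_support' (by omega))
    | i + 1, 0 =>
      exfalso
      rw [getVert_zero, getVert_cons_succ] at hij
      exact hc (hij ▸ q.getVert_mem_support' (by omega))
    | i + 1, j + 1 =>
      rw [getVert_cons_succ, getVert_cons_succ] at hij
      have := ih hq i j (by omega) (by omega) hij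
      omega

lemma isPath_append' {u v w : V} {p : G.Walk u v} {q : G.Walk v w}
    (hp : p.IsPath) (hq : q.IsPath)
    (h : ∀ x, x ∈ p.support → x ∈ q.support → x = v) : (p.append q).IsPath := by
  rw [isPath_def, support_append]
  refine List.Nodup.append hp.support_nodup ?_ ?_
  · have := hq.support_nodup
    rw [q.support_eq_cons] at this
    exact (List.nodup_cons.mp this).2
  · intro x hxp hxq
    have hx := h x hxp (List.mem_of_mem_tail hxq)
    subst hx
    have := hq.support_nodup
    rw [q.support_eq_cons] at this
    exact (List.nodup_cons.mp this).1 hxq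

lemma exists_prefix_to_set (S : List V) :
    ∀ {c t : V} (W : G.Walk c t), W.IsPath → t ∈ S →
      ∃ (u : V) (R : G.Walk c u), R.IsPath ∧ u ∈ S ∧
        (∀ v ∈ R.support, v ≠ u → v ∉ S) ∧ ∀ v ∈ R.support, v ∈ W.support := by
  intro c t W
  induction W with
  | nil =>
    intro _ ht
    exact ⟨_, Walk.nil, IsPath.nil, ht,
      fun v hv hne => absurd (by simpa using hv) hne, fun v hv => hv⟩
  | @cons c c' t' h W ih =>
    intro hW ht
    by_cases hc : c ∈ S
    · refine ⟨c, Walk.nil, IsPath.nil, hc,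
        fun v hv hne => absurd (by simpa using hv) hne, fun v hv => ?_⟩
      simp only [support_nil, List.mem_singleton] at hv
      subst hv; exact Walk.start_mem_support _
    · obtain ⟨u, R, hR, hu, hoff, hsub⟩ := ih hW.of_cons ht
      refine ⟨u, Walk.cons h R, ?_, hu, ?_, ?_⟩
      · exact hR.cons (fun hc' => ((cons_isPath_iff _ _).mp hW).2 (hsub c hc'))
      · intro v hv hne
        rw [support_cons, List.mem_cons] at hv
        rcases hv with rfl | hv
        · exact hc
        · exact hoff v hv hne
      · intro v hv
        rw [support_cons, List.mem_cons] at hv ⊢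
        rcases hv with rfl | hv
        · exact Or.inl rfl
        · exact Or.inr (hsub v hv)

end Walk

lemma two_le_degree' {V : Type*} [Fintype V] (G : SimpleGraph V) [DecidableRel G.Adj]
    {v w1 w2 : V} (h1 : G.Adj v w1) (h2 : G.Adj v w2) (hne : w1 ≠ w2) : 2 ≤ G.degree v :=
  Finset.one_lt_card.mpr ⟨w1, (G.mem_neighborFinset v w1).mpr h1,
    w2, (G.mem_neighborFinset v w2).mpr h2, hne⟩

lemma three_le_degree' {V : Type*} [Fintype V] (G : SimpleGraph V) [DecidableRel G.Adj]
    {v w1 w2 w3 : V} (h1 : G.Adj v w1) (h2 : G.Adj v w2) (h3 : G.Adj v w3)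
    (h12 : w1 ≠ w2) (h13 : w1 ≠ w3) (h23 : w2 ≠ w3) : 3 ≤ G.degree v :=
  Finset.two_lt_card.mpr ⟨w1, (G.mem_neighborFinset v w1).mpr h1,
    w2, (G.mem_neighborFinset v w2).mpr h2,
    w3, (G.mem_neighborFinset v w3).mpr h3, h12, h13, h23⟩

end SimpleGraph

open SimpleGraph Walk in
/-- In a lobster `T` (a tree in which the graph induced on the twice-derived set
`S₂` of non-leaves of non-leaves has maximum degree `≤ 2`), with `P` a longest
path, `U` the vertices of `P` of degree `≥ 3` in `T`, and `X` the vertices off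
`P` adjacent to a vertex of `U`, every vertex of `Y = V ∖ (X ∪ V(P))` is a leaf. -/
theorem lobster_Y_vertices_are_leaves
    {V : Type*} [Fintype V] [DecidableEq V] (T : SimpleGraph V) [DecidableRel T.Adj]
    (htree : T.IsTree)
    (S₁ : Finset V) (hS₁ : S₁ = Finset.univ.filter (fun v => T.degree v ≠ 1))
    (S₂ : Finset V)
    (hS₂ : S₂ = S₁.filter (fun v => (T.neighborFinset v ∩ S₁).card ≠ 1))
    (hlobster : ∀ v ∈ S₂, (T.neighborFinset v ∩ S₂).card ≤ 2)
    {a b : V} (P : T.Walk a b) (hP : P.IsPath)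
    (hlong : ∀ (c d : V) (Q : T.Walk c d), Q.IsPath → Q.length ≤ P.length)
    (U : Set V) (hU : U = {v | v ∈ P.support ∧ 3 ≤ T.degree v})
    (X : Set V) (hX : X = {v | v ∉ P.support ∧ ∃ u ∈ U, T.Adj u v}) :
    ∀ y : V, y ∉ P.support → y ∉ X → T.degree y = 1 := by
  intro y hy1 hy2
  by_contra hdeg
  obtain ⟨W0⟩ := htree.isConnected.preconnected y a
  obtain ⟨u, R, hR, hu, hoff0, -⟩ :=
    Walk.exists_prefix_to_set P.support W0.toPath.val W0.toPath.property P.start_mem_support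
  have hd0 : R.length ≠ 0 := fun h0 => hy1 (by rw [Walk.eq_of_length_eq_zero h0]; exact hu)
  have hRgetd : R.getVert R.length = u := R.getVert_length
  have hRinj := Walk.IsPath.getVert_injOn' R hR
  have hPinj := Walk.IsPath.getVert_injOn' P hP
  have hoff : ∀ i, i ≤ R.length → i ≠ R.length → R.getVert i ∉ P.support := by
    intro i hi hne hmem
    exact hoff0 _ (R.getVert_mem_support' hi)
      (fun he => hne (hRinj i R.length hi le_rfl (he.trans hRgetd.symm))) hmem
  have hP1 : (P.takeUntil u hu).IsPath := hP.takeUntil hu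
  have hP2 : (P.dropUntil u hu).IsPath := hP.dropUntil hu
  have hLsum : (P.takeUntil u hu).length + (P.dropUntil u hu).length = P.length := by
    have := congrArg Walk.length (P.take_spec hu)
    rwa [Walk.length_append] at this
  have bound : ∀ (w : V) (S : T.Walk w u), S.IsPath →
      (∀ v ∈ S.support, v ≠ u → v ∉ P.support) →
      S.length ≤ (P.takeUntil u hu).length ∧ S.length ≤ (P.dropUntil u hu).length := by
    intro w S hS hSoff
    constructor
    · have hB : ((P.dropUntil u hu).reverse.append S.reverse).IsPath := by
        refine Walk.isPath_append' hP2.reverse hS.reverse ?_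
        intro x hx1 hx2
        rw [Walk.support_reverse, List.mem_reverse] at hx1 hx2
        by_contra hne
        exact hSoff x hx2 hne (P.support_dropUntil_subset hu hx1)
      have := hlong _ _ _ hB
      rw [Walk.length_append, Walk.length_reverse, Walk.length_reverse] at this
      omega
    · have hA : ((P.takeUntil u hu).append S.reverse).IsPath := by
        refine Walk.isPath_append' hP1 hS.reverse ?_
        intro x hx1 hx2
        rw [Walk.support_reverse, List.mem_reverse] at hx2
        by_contra hne
        exact hSoff x hx2 hne (P.support_takeUntil_subset hu hx1)
      have := hlong _ _ _ hA
      rw [Walk.length_append, Walk.length_reverse] at this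
      omega
  obtain ⟨hdLge1, hdLge2⟩ := bound y R hR hoff0
  have hgu : P.getVert (P.takeUntil u hu).length = u := by
    obtain ⟨n, hn⟩ : ∃ n, (P.takeUntil u hu).length = n := ⟨_, rfl⟩
    rw [hn]
    conv_lhs => rw [← P.take_spec hu]
    rw [Walk.getVert_append, if_neg (by omega),
      show n - (P.takeUntil u hu).length = 0 by omega, Walk.getVert_zero]
  have memS1 : ∀ v, v ∈ S₁ ↔ T.degree v ≠ 1 := by intro v; simp [hS₁]
  by_cases hd1 : R.length = 1
  · -- y is adjacent to `u`, an interior vertex of `P`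
    have h01 := R.adj_getVert_succ (i := 0) (by omega)
    rw [Walk.getVert_zero, show 0 + 1 = R.length by omega, hRgetd] at h01
    have hadj_up : T.Adj u (P.getVert ((P.takeUntil u hu).length - 1)) := by
      have := P.adj_getVert_succ (i := (P.takeUntil u hu).length - 1) (by omega)
      rw [show (P.takeUntil u hu).length - 1 + 1 = (P.takeUntil u hu).length by omega,
        hgu] at this
      exact this.symm
    have hadj_uq : T.Adj u (P.getVert ((P.takeUntil u hu).length + 1)) := by
      have := P.adj_getVert_succ (i := (P.takeUntil u hu).length) (by omega)
      rwa [hgu] at this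
    have hpq : P.getVert ((P.takeUntil u hu).length - 1)
        ≠ P.getVert ((P.takeUntil u hu).length + 1) := fun he => by
      have := hPinj _ _ (by omega) (by omega) he; omega
    have hpy : P.getVert ((P.takeUntil u hu).length - 1) ≠ y := fun he =>
      hy1 (he ▸ P.getVert_mem_support' (by omega))
    have hqy : P.getVert ((P.takeUntil u hu).length + 1) ≠ y := fun he =>
      hy1 (he ▸ P.getVert_mem_support' (by omega))
    have hdegu : 3 ≤ T.degree u :=
      three_le_degree' T hadj_up hadj_uq h01.symm hpq hpy hqy
    exact hy2 (by rw [hX]; exact ⟨hy1, u, (by rw [hU]; exact ⟨hu, hdegu⟩), h01.symm⟩)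
  · -- y is at distance ≥ 2 from `P`
    have hd2 : 2 ≤ R.length := by omega
    have hy1adj : T.Adj y (R.getVert 1) := by
      have := R.adj_getVert_succ (i := 0) (by omega)
      rwa [Walk.getVert_zero, show (0 : ℕ) + 1 = 1 from rfl] at this
    have hdegy : 1 < (T.neighborFinset y).card := by
      have hpos : 0 < (T.neighborFinset y).card :=
        Finset.card_pos.mpr ⟨R.getVert 1, (T.mem_neighborFinset y _).mpr hy1adj⟩
      have hde : T.degree y = (T.neighborFinset y).card := rfl
      omega
    obtain ⟨z, hzmem, hzne⟩ := Finset.exists_mem_ne hdegy (R.getVert 1)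
    have hz : T.Adj y z := (T.mem_neighborFinset y z).mp hzmem
    have hzR : z ∉ R.support := by
      intro hzin
      have h2 : ((Walk.cons hz Walk.nil) : T.Walk y z).IsPath := by simp [hz.ne]
      have heq : R.takeUntil z hzin = Walk.cons hz Walk.nil :=
        (htree.existsUnique_path y z).unique (hR.takeUntil hzin) h2
      have hlen1 : (R.takeUntil z hzin).length = 1 := by rw [heq]; rfl
      have hz1 : R.getVert 1 = z := by
        conv_lhs => rw [← R.take_spec hzin]
        rw [Walk.getVert_append, if_neg (by omega), show 1 - (R.takeUntil z hzin).length = 0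
          by omega, Walk.getVert_zero]
      exact hzne hz1.symm
    have hzP : z ∉ P.support := by
      intro hzin
      have hQ2 : (R.reverse.concat hz).IsPath := by
        rw [Walk.concat_eq_append]
        refine Walk.isPath_append' hR.reverse (by simp [hz.ne]) ?_
        intro x hx1 hx2
        rw [Walk.support_reverse, List.mem_reverse] at hx1
        simp only [Walk.support_cons, Walk.support_nil, List.mem_cons,
          List.mem_singleton, List.not_mem_nil, or_false] at hx2
        rcases hx2 with rfl | rfl
        · rfl
        · exact absurd hx1 hzR
      have hW1sub : ∀ x ∈ ((P.takeUntil u hu).reverse.append (P.takeUntil z hzin)).support,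
          x ∈ P.support := by
        intro x hx
        rw [Walk.mem_support_append_iff] at hx
        rcases hx with hx | hx
        · rw [Walk.support_reverse, List.mem_reverse] at hx
          exact P.support_takeUntil_subset hu hx
        · exact P.support_takeUntil_subset hzin hx
      have heq : ((P.takeUntil u hu).reverse.append (P.takeUntil z hzin)).toPath.val
          = R.reverse.concat hz :=
        (htree.existsUnique_path u z).unique
          ((P.takeUntil u hu).reverse.append (P.takeUntil z hzin)).toPath.property hQ2
      have hmem : R.getVert 1 ∈ (R.reverse.concat hz).support := by
        rw [Walk.concat_eq_append, Walk.mem_support_append_iff]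
        left
        rw [Walk.support_reverse, List.mem_reverse]
        exact R.getVert_mem_support' (by omega)
      rw [← heq] at hmem
      exact hoff 1 (by omega) (by omega)
        (hW1sub _ (Walk.support_toPath_subset _ hmem))
    have hcons : ((Walk.cons hz.symm R) : T.Walk z u).IsPath := hR.cons hzR
    obtain ⟨hL1d, hL2d⟩ := bound z (Walk.cons hz.symm R) hcons (by
      intro v hv hne
      rw [Walk.support_cons, List.mem_cons] at hv
      rcases hv with rfl | hv
      · exact hzP
      · exact hoff0 v hv hne)
    rw [Walk.length_cons] at hL1d hL2d
    have hL13 : 3 ≤ (P.takeUntil u hu).length := by omega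
    have hL23 : 3 ≤ (P.dropUntil u hu).length := by omega
    -- adjacencies along `P`
    have hA1 : T.Adj u (P.getVert ((P.takeUntil u hu).length - 1)) := by
      have := P.adj_getVert_succ (i := (P.takeUntil u hu).length - 1) (by omega)
      rw [show (P.takeUntil u hu).length - 1 + 1 = (P.takeUntil u hu).length by omega,
        hgu] at this
      exact this.symm
    have hA2 : T.Adj u (P.getVert ((P.takeUntil u hu).length + 1)) := by
      have := P.adj_getVert_succ (i := (P.takeUntil u hu).length) (by omega)
      rwa [hgu] at this
    have hA3 : T.Adj (P.getVert ((P.takeUntil u hu).length - 1))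
        (P.getVert ((P.takeUntil u hu).length - 2)) := by
      have := P.adj_getVert_succ (i := (P.takeUntil u hu).length - 2) (by omega)
      rw [show (P.takeUntil u hu).length - 2 + 1 = (P.takeUntil u hu).length - 1 by omega]
        at this
      exact this.symm
    have hA4 : T.Adj (P.getVert ((P.takeUntil u hu).length + 1))
        (P.getVert ((P.takeUntil u hu).length + 1 + 1)) :=
      P.adj_getVert_succ (by omega)
    have hA5 : T.Adj (P.getVert ((P.takeUntil u hu).length - 2))
        (P.getVert ((P.takeUntil u hu).length - 3)) := by
      have := P.adj_getVert_succ (i := (P.takeUntil u hu).length - 3) (by omega)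
      rw [show (P.takeUntil u hu).length - 3 + 1 = (P.takeUntil u hu).length - 2 by omega]
        at this
      exact this.symm
    have hA6 : T.Adj (P.getVert ((P.takeUntil u hu).length + 1 + 1))
        (P.getVert ((P.takeUntil u hu).length + 1 + 1 + 1)) :=
      P.adj_getVert_succ (by omega)
    -- adjacencies along `R`
    have hB1 : T.Adj (R.getVert (R.length - 1)) u := by
      have := R.adj_getVert_succ (i := R.length - 1) (by omega)
      rwa [show R.length - 1 + 1 = R.length by omega, hRgetd] at this
    have hB2 : T.Adj (R.getVert (R.length - 2)) (R.getVert (R.length - 1)) := by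
      have := R.adj_getVert_succ (i := R.length - 2) (by omega)
      rwa [show R.length - 2 + 1 = R.length - 1 by omega] at this
    -- distinctness facts
    have hne_pq : P.getVert ((P.takeUntil u hu).length - 1)
        ≠ P.getVert ((P.takeUntil u hu).length + 1) := fun he => by
      have := hPinj _ _ (by omega) (by omega) he; omega
    have hne_up2 : u ≠ P.getVert ((P.takeUntil u hu).length - 2) := fun he => by
      have := hPinj ((P.takeUntil u hu).length) ((P.takeUntil u hu).length - 2)
        (by omega) (by omega) (hgu.trans he); omega
    have hne_uq2 : u ≠ P.getVert ((P.takeUntil u hu).length + 1 + 1) := fun he => by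
      have := hPinj ((P.takeUntil u hu).length) ((P.takeUntil u hu).length + 1 + 1)
        (by omega) (by omega) (hgu.trans he); omega
    have hne_pp3 : P.getVert ((P.takeUntil u hu).length - 1)
        ≠ P.getVert ((P.takeUntil u hu).length - 3) := fun he => by
      have := hPinj _ _ (by omega) (by omega) he; omega
    have hne_qq3 : P.getVert ((P.takeUntil u hu).length + 1)
        ≠ P.getVert ((P.takeUntil u hu).length + 1 + 1 + 1) := fun he => by
      have := hPinj _ _ (by omega) (by omega) he; omega
    have hw1off : R.getVert (R.length - 1) ∉ P.support := hoff _ (by omega) (by omega)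
    have hw2off : R.getVert (R.length - 2) ∉ P.support := hoff _ (by omega) (by omega)
    have hmem_p : P.getVert ((P.takeUntil u hu).length - 1) ∈ P.support :=
      P.getVert_mem_support' (by omega)
    have hmem_q : P.getVert ((P.takeUntil u hu).length + 1) ∈ P.support :=
      P.getVert_mem_support' (by omega)
    have hne_uw2 : u ≠ R.getVert (R.length - 2) := fun he => hw2off (he ▸ hu)
    have hne_w1w2 : R.getVert (R.length - 1) ≠ R.getVert (R.length - 2) := fun he => by
      have := hRinj _ _ (by omega) (by omega) he; omega
    -- membership in S₁
    have hS1u : u ∈ S₁ := (memS1 u).mpr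
      (by have := two_le_degree' T hA1 hA2 hne_pq; omega)
    have hS1p : P.getVert ((P.takeUntil u hu).length - 1) ∈ S₁ := (memS1 _).mpr
      (by have := two_le_degree' T hA1.symm hA3 hne_up2; omega)
    have hS1q : P.getVert ((P.takeUntil u hu).length + 1) ∈ S₁ := (memS1 _).mpr
      (by have := two_le_degree' T hA2.symm hA4 hne_uq2; omega)
    have hS1p2 : P.getVert ((P.takeUntil u hu).length - 2) ∈ S₁ := (memS1 _).mpr
      (by have := two_le_degree' T hA3.symm hA5 hne_pp3; omega)
    have hS1q2 : P.getVert ((P.takeUntil u hu).length + 1 + 1) ∈ S₁ := (memS1 _).mpr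
      (by have := two_le_degree' T hA4.symm hA6 hne_qq3; omega)
    have hS1w1 : R.getVert (R.length - 1) ∈ S₁ := (memS1 _).mpr
      (by have := two_le_degree' T hB1 hB2.symm hne_uw2; omega)
    have hS1w2 : R.getVert (R.length - 2) ∈ S₁ := by
      rcases Nat.lt_or_ge R.length 3 with h3 | h3
      · have hyw2 : R.getVert (R.length - 2) = y := by
          rw [show R.length - 2 = 0 by omega, Walk.getVert_zero]
        exact (memS1 _).mpr (by rw [hyw2]; exact hdeg)
      · have hB3 : T.Adj (R.getVert (R.length - 3)) (R.getVert (R.length - 2)) := by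
          have := R.adj_getVert_succ (i := R.length - 3) (by omega)
          rwa [show R.length - 3 + 1 = R.length - 2 by omega] at this
        have hne : R.getVert (R.length - 1) ≠ R.getVert (R.length - 3) := fun he => by
          have := hRinj _ _ (by omega) (by omega) he; omega
        exact (memS1 _).mpr (by have := two_le_degree' T hB2 hB3.symm hne; omega)
    -- membership in S₂
    have memS2 : ∀ v, v ∈ S₂ ↔ v ∈ S₁ ∧ (T.neighborFinset v ∩ S₁).card ≠ 1 := by
      intro v; rw [hS₂, Finset.mem_filter]
    have card_ne_one : ∀ (s : Finset V) (x₁ x₂ : V), x₁ ∈ s → x₂ ∈ s → x₁ ≠ x₂ →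
        s.card ≠ 1 := by
      intro s x₁ x₂ h1 h2 hne
      have := Finset.one_lt_card.mpr ⟨x₁, h1, x₂, h2, hne⟩; omega
    have hS2p : P.getVert ((P.takeUntil u hu).length - 1) ∈ S₂ := (memS2 _).mpr
      ⟨hS1p, card_ne_one _ u (P.getVert ((P.takeUntil u hu).length - 2))
        (Finset.mem_inter.mpr ⟨(T.mem_neighborFinset _ _).mpr hA1.symm, hS1u⟩)
        (Finset.mem_inter.mpr ⟨(T.mem_neighborFinset _ _).mpr hA3, hS1p2⟩) hne_up2⟩
    have hS2q : P.getVert ((P.takeUntil u hu).length + 1) ∈ S₂ := (memS2 _).mpr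
      ⟨hS1q, card_ne_one _ u (P.getVert ((P.takeUntil u hu).length + 1 + 1))
        (Finset.mem_inter.mpr ⟨(T.mem_neighborFinset _ _).mpr hA2.symm, hS1u⟩)
        (Finset.mem_inter.mpr ⟨(T.mem_neighborFinset _ _).mpr hA4, hS1q2⟩) hne_uq2⟩
    have hS2w1 : R.getVert (R.length - 1) ∈ S₂ := (memS2 _).mpr
      ⟨hS1w1, card_ne_one _ u (R.getVert (R.length - 2))
        (Finset.mem_inter.mpr ⟨(T.mem_neighborFinset _ _).mpr hB1, hS1u⟩)
        (Finset.mem_inter.mpr ⟨(T.mem_neighborFinset _ _).mpr hB2.symm, hS1w2⟩) hne_uw2⟩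
    have hS2u : u ∈ S₂ := (memS2 _).mpr
      ⟨hS1u, card_ne_one _ (P.getVert ((P.takeUntil u hu).length - 1))
        (P.getVert ((P.takeUntil u hu).length + 1))
        (Finset.mem_inter.mpr ⟨(T.mem_neighborFinset _ _).mpr hA1, hS1p⟩)
        (Finset.mem_inter.mpr ⟨(T.mem_neighborFinset _ _).mpr hA2, hS1q⟩) hne_pq⟩
    have hne_pw1 : P.getVert ((P.takeUntil u hu).length - 1) ≠ R.getVert (R.length - 1) :=
      fun he => hw1off (he ▸ hmem_p)
    have hne_qw1 : P.getVert ((P.takeUntil u hu).length + 1) ≠ R.getVert (R.length - 1) :=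
      fun he => hw1off (he ▸ hmem_q)
    have hfinal : 2 < (T.neighborFinset u ∩ S₂).card :=
      Finset.two_lt_card.mpr ⟨P.getVert ((P.takeUntil u hu).length - 1),
        Finset.mem_inter.mpr ⟨(T.mem_neighborFinset _ _).mpr hA1, hS2p⟩,
        P.getVert ((P.takeUntil u hu).length + 1),
        Finset.mem_inter.mpr ⟨(T.mem_neighborFinset _ _).mpr hA2, hS2q⟩,
        R.getVert (R.length - 1),
        Finset.mem_inter.mpr ⟨(T.mem_neighborFinset _ _).mpr hB1.symm, hS2w1⟩,
        hne_pq, hne_pw1, hne_qw1⟩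
    have := hlobster u hS2u
    omega
end
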